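/- arXiv:2503.20372 — 6 statements merged into one kernel-verified Lean document; each statement's English description precedes it below -/
import Mathlib

section
/- Fix mesh sizes Δx > 0 and Δy > 0. For every vertex-indexed grid function Ẽ : ℤ² → ℝ, define the cell-centered magnetic-field increments LBx[Ẽ](i,j) = −(1/(2Δy))·[(Ẽ(i,j) + Ẽ(i−1,j)) − (Ẽ(i,j−1) + Ẽ(i−1,j−1))] and LBy[Ẽ](i,j) = (1/(2Δx))·[(Ẽ(i,j) + Ẽ(i,j−1)) − (Ẽ(i−1,j) + Ẽ(i−1,j−1))]. Then the discrete divergence of the pair (LBx[Ẽ], LBy[Ẽ]) vanishes at every vertex: divD(LBx[Ẽ], LBy[Ẽ])(i,j) = 0 for all (i,j) ∈ ℤ². (Hence the semi-discrete multidimensional-Riemann-solver scheme preserves the discrete divergence of the magnetic field exactly, d/dt (∇·B)_{i+1/2,j+1/2} = 0, regardless of how the vertex values Ẽ_z are computed, so in particular for both the first-order and the MinMod-reconstructed second-order versions.) -/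
/-- Discrete divergence of a pair of cell-centered grid functions at vertex `(i,j)`
(the point `(x_{i+1/2}, y_{j+1/2})`). -/
noncomputable def divD (dx dy : ℝ) (Ax Ay : ℤ → ℤ → ℝ) (i j : ℤ) : ℝ :=
  (1 / (2 * dx)) * ((Ax (i + 1) (j + 1) - Ax i (j + 1)) + (Ax (i + 1) j - Ax i j)) +
  (1 / (2 * dy)) * ((Ay (i + 1) (j + 1) - Ay (i + 1) j) + (Ay i (j + 1) - Ay i j))

/-- Semi-discrete increment of the cell value of `B_x` from vertex values `Ẽ_z`. -/
noncomputable def LBx (dy : ℝ) (E : ℤ → ℤ → ℝ) (i j : ℤ) : ℝ :=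
  -(1 / (2 * dy)) * ((E i j + E (i - 1) j) - (E i (j - 1) + E (i - 1) (j - 1)))

/-- Semi-discrete increment of the cell value of `B_y` from vertex values `Ẽ_z`. -/
noncomputable def LBy (dx : ℝ) (E : ℤ → ℤ → ℝ) (i j : ℤ) : ℝ :=
  (1 / (2 * dx)) * ((E i j + E i (j - 1)) - (E (i - 1) j + E (i - 1) (j - 1)))

/-- The discrete divergence of the semi-discrete magnetic-field increments vanishes at every
vertex, for any choice of the vertex values `Ẽ`. -/
theorem divB_increment_vanishes (dx dy : ℝ) (hdx : 0 < dx) (hdy : 0 < dy)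
    (E : ℤ → ℤ → ℝ) (i j : ℤ) :
    divD dx dy (LBx dy E) (LBy dx E) i j = 0 := by
  simp only [divD, LBx, LBy]
  have h1 : dx ≠ 0 := ne_of_gt hdx
  have h2 : dy ≠ 0 := ne_of_gt hdy
  field_simp
  ring_nf
end

section
/- Fix mesh sizes Δx > 0 and Δy > 0. For every vertex-indexed grid function B̃ : ℤ² → ℝ and all cell-centered current grid functions Jx, Jy : ℤ² → ℝ, define the cell-centered electric-field increments LEx[B̃](i,j) = −(1/(2Δy))·[(B̃(i,j) + B̃(i−1,j)) − (B̃(i,j−1) + B̃(i−1,j−1))] − Jx(i,j) and LEy[B̃](i,j) = (1/(2Δx))·[(B̃(i,j) + B̃(i,j−1)) − (B̃(i−1,j) + B̃(i−1,j−1))] − Jy(i,j). Then at every vertex (i,j) ∈ ℤ², divD(LEx[B̃], LEy[B̃])(i,j) = −divD(Jx, Jy)(i,j). (Hence for the semi-discrete multidimensional-Riemann-solver scheme, d/dt (∇·E)_{i+1/2,j+1/2} = −(∇·J)_{i+1/2,j+1/2}, the curl contributions cancelling exactly, regardless of how the vertex values B̃_z are computed.) -/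
/-- Semi-discrete increment of the cell value of `E_x` from vertex values `B̃_z` and the
cell-centered current `Jx`. -/
noncomputable def LEx (dy : ℝ) (B : ℤ → ℤ → ℝ) (Jx : ℤ → ℤ → ℝ) (i j : ℤ) : ℝ :=
  -(1 / (2 * dy)) * ((B i j + B (i - 1) j) - (B i (j - 1) + B (i - 1) (j - 1))) - Jx i j

/-- Semi-discrete increment of the cell value of `E_y` from vertex values `B̃_z` and the
cell-centered current `Jy`. -/
noncomputable def LEy (dx : ℝ) (B : ℤ → ℤ → ℝ) (Jy : ℤ → ℤ → ℝ) (i j : ℤ) : ℝ :=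
  (1 / (2 * dx)) * ((B i j + B i (j - 1)) - (B (i - 1) j + B (i - 1) (j - 1))) - Jy i j

/-- The discrete divergence of the semi-discrete electric-field increments equals minus the
discrete divergence of the current, at every vertex and for any choice of the vertex
values `B̃`: the curl contributions cancel exactly. -/
theorem divE_increment_eq_neg_divJ (dx dy : ℝ) (hdx : 0 < dx) (hdy : 0 < dy)
    (B : ℤ → ℤ → ℝ) (Jx Jy : ℤ → ℤ → ℝ) (i j : ℤ) :
    divD dx dy (LEx dy B Jx) (LEy dx B Jy) i j = -divD dx dy Jx Jy i j := by
  simp only [divD, LEx, LEy]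
  have h1 : dx ≠ 0 := ne_of_gt hdx
  have h2 : dy ≠ 0 := ne_of_gt hdy
  have : ∀ k : ℤ, k + 1 - 1 = k := fun k => by ring
  simp only [this]
  field_simp
  ring
end

section
/- Fix mesh sizes Δx > 0, Δy > 0 and a time step Δt > 0. Let Bx⁰, By⁰ : ℤ² → ℝ be cell-centered grid functions and let Ẽ⁰, Ẽ¹ : ℤ² → ℝ be any two vertex-indexed grid functions. Define the SSP-RK2 stages componentwise by Bx¹ = Bx⁰ + Δt·LBx[Ẽ⁰], By¹ = By⁰ + Δt·LBy[Ẽ⁰], Bx² = Bx¹ + Δt·LBx[Ẽ¹], By² = By¹ + Δt·LBy[Ẽ¹], and the updated field Bxⁿ⁺¹ = (Bx⁰ + Bx²)/2, Byⁿ⁺¹ = (By⁰ + By²)/2. Then the discrete divergence is exactly preserved: divD(Bxⁿ⁺¹, Byⁿ⁺¹)(i,j) = divD(Bx⁰, By⁰)(i,j) for every vertex (i,j) ∈ ℤ². -/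
/-- The SSP-RK2 (explicit, O2EXP-MultiD) fully discrete update of the magnetic field exactly
preserves the discrete divergence at every vertex, for any vertex values `Ẽ⁰, Ẽ¹` used in
the two stages. -/
theorem ssprk2_preserves_divB (dx dy dt : ℝ) (hdx : 0 < dx) (hdy : 0 < dy) (hdt : 0 < dt)
    (Bx0 By0 : ℤ → ℤ → ℝ) (E0 E1 : ℤ → ℤ → ℝ) (i j : ℤ) :
    -- stage 1 : Bx1 = Bx0 + Δt·LBx[Ẽ⁰], By1 = By0 + Δt·LBy[Ẽ⁰]
    -- stage 2 : Bx2 = Bx1 + Δt·LBx[Ẽ¹], By2 = By1 + Δt·LBy[Ẽ¹]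
    -- update  : Bⁿ⁺¹ = (B⁰ + B²)/2
    divD dx dy
      (fun a b => (Bx0 a b + ((Bx0 a b + dt * LBx dy E0 a b) + dt * LBx dy E1 a b)) / 2)
      (fun a b => (By0 a b + ((By0 a b + dt * LBy dx E0 a b) + dt * LBy dx E1 a b)) / 2)
      i j
    = divD dx dy Bx0 By0 i j := by
  simp only [divD, LBx, LBy]
  field_simp
  ring
end

section
/- Fix mesh sizes Δx > 0, Δy > 0 and a time step Δt > 0. Let Ex⁰, Ey⁰ : ℤ² → ℝ be cell-centered grid functions, B̃⁰, B̃¹ : ℤ² → ℝ any vertex-indexed grid functions, and Jx⁰, Jy⁰, Jx¹, Jy¹ : ℤ² → ℝ any cell-centered grid functions. Define the SSP-RK2 stages Ex¹ = Ex⁰ + Δt·(CEx[B̃⁰] − Jx⁰), Ey¹ = Ey⁰ + Δt·(CEy[B̃⁰] − Jy⁰), Ex² = Ex¹ + Δt·(CEx[B̃¹] − Jx¹), Ey² = Ey¹ + Δt·(CEy[B̃¹] − Jy¹), and the updated field Exⁿ⁺¹ = (Ex⁰ + Ex²)/2, Eyⁿ⁺¹ = (Ey⁰ + Ey²)/2.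 Then at every vertex (i,j) ∈ ℤ², divD(Exⁿ⁺¹, Eyⁿ⁺¹)(i,j) = divD(Ex⁰, Ey⁰)(i,j) − (Δt/2)·[ divD(Jx⁰, Jy⁰)(i,j) + divD(Jx¹, Jy¹)(i,j) ]. -/
/-- Curl increment for the cell value of `E_x` from vertex values `B̃_z`. -/
noncomputable def CEx (dy : ℝ) (B : ℤ → ℤ → ℝ) (i j : ℤ) : ℝ :=
  -(1 / (2 * dy)) * ((B i j + B (i - 1) j) - (B i (j - 1) + B (i - 1) (j - 1)))

/-- Curl increment for the cell value of `E_y` from vertex values `B̃_z`. -/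
noncomputable def CEy (dx : ℝ) (B : ℤ → ℤ → ℝ) (i j : ℤ) : ℝ :=
  (1 / (2 * dx)) * ((B i j + B i (j - 1)) - (B (i - 1) j + B (i - 1) (j - 1)))

/-- For the SSP-RK2 (explicit, O2EXP-MultiD) fully discrete update of the electric field, the
discrete divergence changes only by the divergence of the currents of the two stages. -/
theorem ssprk2_divE_evolution (dx dy dt : ℝ) (hdx : 0 < dx) (hdy : 0 < dy) (hdt : 0 < dt)
    (Ex0 Ey0 : ℤ → ℤ → ℝ) (B0 B1 : ℤ → ℤ → ℝ) (Jx0 Jy0 Jx1 Jy1 : ℤ → ℤ → ℝ) (i j : ℤ) :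
    -- stage 1 : Ex1 = Ex0 + Δt·(CEx[B̃⁰] − Jx⁰), Ey1 = Ey0 + Δt·(CEy[B̃⁰] − Jy⁰)
    -- stage 2 : Ex2 = Ex1 + Δt·(CEx[B̃¹] − Jx¹), Ey2 = Ey1 + Δt·(CEy[B̃¹] − Jy¹)
    -- update  : Eⁿ⁺¹ = (E⁰ + E²)/2
    divD dx dy
      (fun a b => (Ex0 a b +
        ((Ex0 a b + dt * (CEx dy B0 a b - Jx0 a b)) + dt * (CEx dy B1 a b - Jx1 a b))) / 2)
      (fun a b => (Ey0 a b +
        ((Ey0 a b + dt * (CEy dx B0 a b - Jy0 a b)) + dt * (CEy dx B1 a b - Jy1 a b))) / 2)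
      i j
    = divD dx dy Ex0 Ey0 i j
      - (dt / 2) * (divD dx dy Jx0 Jy0 i j + divD dx dy Jx1 Jy1 i j) := by
  simp only [divD, CEx, CEy]
  field_simp
  ring
end

section
/- Fix mesh sizes Δx > 0, Δy > 0 and a time step Δt > 0. Let Bxⁿ, Byⁿ : ℤ² → ℝ be cell-centered grid functions and Ẽ¹, Ẽ² : ℤ² → ℝ any two vertex-indexed grid functions. Define the IMEX update (in which the implicit source terms do not act on the magnetic field) by Bxⁿ⁺¹ = Bxⁿ + (Δt/2)·(LBx[Ẽ¹] + LBx[Ẽ²]) and Byⁿ⁺¹ = Byⁿ + (Δt/2)·(LBy[Ẽ¹] + LBy[Ẽ²]). Then the discrete divergence is exactly preserved: divD(Bxⁿ⁺¹, Byⁿ⁺¹)(i,j) = divD(Bxⁿ, Byⁿ)(i,j) for every vertex (i,j) ∈ ℤ². -/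
/-- The IMEX (O2IMEX-MultiD) fully discrete update of the magnetic field, in which the
implicit source terms do not act on the magnetic field, exactly preserves the discrete
divergence at every vertex, for any vertex values `Ẽ¹, Ẽ²` of the two implicit stages. -/
theorem imex_preserves_divB (dx dy dt : ℝ) (hdx : 0 < dx) (hdy : 0 < dy) (hdt : 0 < dt)
    (Bxn Byn : ℤ → ℤ → ℝ) (E1 E2 : ℤ → ℤ → ℝ) (i j : ℤ) :
    divD dx dy
      (fun a b => Bxn a b + (dt / 2) * (LBx dy E1 a b + LBx dy E2 a b))
      (fun a b => Byn a b + (dt / 2) * (LBy dx E1 a b + LBy dx E2 a b))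
      i j
    = divD dx dy Bxn Byn i j := by
  simp only [divD, LBx, LBy]
  field_simp
  ring
end

section
/- Fix mesh sizes Δx > 0, Δy > 0 and a time step Δt > 0. Let Exⁿ, Eyⁿ : ℤ² → ℝ be cell-centered grid functions, B̃¹, B̃² : ℤ² → ℝ any vertex-indexed grid functions, and Jx¹, Jy¹, Jx², Jy² : ℤ² → ℝ any cell-centered grid functions. Define the IMEX update Exⁿ⁺¹ = Exⁿ + (Δt/2)·(CEx[B̃¹] + CEx[B̃²] − Jx¹ − Jx²) and Eyⁿ⁺¹ = Eyⁿ + (Δt/2)·(CEy[B̃¹] + CEy[B̃²] − Jy¹ − Jy²). Then at every vertex (i,j) ∈ ℤ², divD(Exⁿ⁺¹, Eyⁿ⁺¹)(i,j) = divD(Exⁿ, Eyⁿ)(i,j) − (Δt/2)·[ divD(Jx¹, Jy¹)(i,j) + divD(Jx², Jy²)(i,j) ]. -/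
/-- For the IMEX (O2IMEX-MultiD) fully discrete update of the electric field, the discrete
divergence changes only by the divergence of the currents of the two implicit stages. -/
theorem imex_divE_evolution (dx dy dt : ℝ) (hdx : 0 < dx) (hdy : 0 < dy) (hdt : 0 < dt)
    (Exn Eyn : ℤ → ℤ → ℝ) (B1 B2 : ℤ → ℤ → ℝ) (Jx1 Jy1 Jx2 Jy2 : ℤ → ℤ → ℝ) (i j : ℤ) :
    divD dx dy
      (fun a b => Exn a b + (dt / 2) * (CEx dy B1 a b + CEx dy B2 a b - Jx1 a b - Jx2 a b))
      (fun a b => Eyn a b + (dt / 2) * (CEy dx B1 a b + CEy dx B2 a b - Jy1 a b - Jy2 a b))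
      i j
    = divD dx dy Exn Eyn i j
      - (dt / 2) * (divD dx dy Jx1 Jy1 i j + divD dx dy Jx2 Jy2 i j) := by
  unfold divD CEx CEy
  simp only [add_sub_cancel_right]
  field_simp
  ring
end
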